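/- If Φ is a loop-free unit flow from A to B, then the stopped paths (Y_0,…,Y_{τ_B^Y}) of the associated Markov chain Y are self-avoiding P^Φ-almost surely, i.e., almost surely Y_i ≠ Y_j for all 0 ≤ i < j ≤ τ_B^Y. -/

import Mathlib

open MeasureTheory ProbabilityTheory ENNReal Set Filter
open scoped Classical

noncomputable section

variable {Ω : Type*}

/-- The Dirichlet form `E(h) = (1/2) ∫ (h(y)-h(x))² K(dx,dy)` (in `ℝ≥0∞`). -/
def dirichletForm [MeasurableSpace Ω] (K : Measure (Ω × Ω)) (h : Ω → ℝ) : ℝ≥0∞ :=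
  2⁻¹ * ∫⁻ p, ENNReal.ofReal ((h p.2 - h p.1) ^ 2) ∂K

/-- The class `V_AB` of test potentials. -/
def VAB [MeasurableSpace Ω] (A B : Set Ω) (K : Measure (Ω × Ω)) : Set (Ω → ℝ) :=
  {h | Measurable h ∧ (∀ x ∈ A, h x = 1) ∧ (∀ x ∈ B, h x = 0) ∧
    (∀ x, 0 ≤ h x ∧ h x ≤ 1) ∧ dirichletForm K h < ⊤}

/-- The capacity `Cap(A,B)`, defined by the Dirichlet principle. -/
def Cap [MeasurableSpace Ω] (A B : Set Ω) (K : Measure (Ω × Ω)) : ℝ≥0∞ :=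
  ⨅ h ∈ VAB A B K, dirichletForm K h

/-- Finite paths `(γ₀, …, γ_{n+1})` with at least one edge. -/
abbrev PathSpace (Ω : Type*) := Σ n : ℕ, Fin (n + 2) → Ω

/-- The set `Γ_AB` of finite paths from `A` to `B` not touching `B` before the end. -/
def GammaAB (A B : Set Ω) : Set (PathSpace Ω) :=
  {γ | γ.2 0 ∈ A ∧ γ.2 (Fin.last (γ.1 + 1)) ∈ B ∧
    ∀ i : Fin (γ.1 + 2), 0 < (i : ℕ) → (i : ℕ) < γ.1 + 1 → γ.2 i ∉ B}

/-- Sum of `g` over the (directed) edges of the path `γ`. -/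
def pathSum (g : Ω × Ω → ℝ≥0∞) (γ : PathSpace Ω) : ℝ≥0∞ :=
  ∑ j : Fin (γ.1 + 1), g (γ.2 j.castSucc, γ.2 j.succ)

/-- `Φ` is the edge measure `Φ_P` of the path measure `P`. -/
def IsEdgeMeasure [MeasurableSpace Ω] (P : Measure (PathSpace Ω)) (Φ : Measure (Ω × Ω)) : Prop :=
  ∀ g : Ω × Ω → ℝ≥0∞, Measurable g → ∫⁻ p, g p ∂Φ = ∫⁻ γ, pathSum g γ ∂P

/-- `Φ` is a unit flow from `A` to `B`. -/
def IsUnitFlow [MeasurableSpace Ω] (A B : Set Ω) (Φ : Measure (Ω × Ω)) : Prop :=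
  SigmaFinite Φ ∧
  Φ (A ×ˢ univ) = 1 ∧ Φ (univ ×ˢ A) = 0 ∧
  Φ (univ ×ˢ B) = 1 ∧ Φ (B ×ˢ univ) = 0 ∧
  (∀ C : Set Ω, MeasurableSet C → C ⊆ (A ∪ B)ᶜ → Φ (C ×ˢ univ) = Φ (univ ×ˢ C)) ∧
  ∃ χ : Set (Ω × Ω), MeasurableSet χ ∧ Φ χᶜ = 0 ∧ ∀ x y : Ω, (x, y) ∈ χ → (y, x) ∉ χ

/-- `χ` contains no loops. -/
def NoLoops (χ : Set (Ω × Ω)) : Prop :=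
  ∀ (n : ℕ) (γ : Fin (n + 2) → Ω), γ (Fin.last (n + 1)) = γ 0 →
    ∃ j : Fin (n + 1), (γ j.castSucc, γ j.succ) ∉ χ

/-- `Φ` is a loop-free unit flow from `A` to `B`. -/
def IsLoopFreeUnitFlow [MeasurableSpace Ω] (A B : Set Ω) (Φ : Measure (Ω × Ω)) : Prop :=
  IsUnitFlow A B Φ ∧
  ∃ χ : Set (Ω × Ω), MeasurableSet χ ∧ Φ χᶜ = 0 ∧
    (∀ x y : Ω, (x, y) ∈ χ → (y, x) ∉ χ) ∧ NoLoops χ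

/-- `Φ(dx,dy) = ν(dx) ℓ(x,dy)` with `ν = Φ.fst` the left marginal. -/
def Disintegrates [MeasurableSpace Ω] (Φ : Measure (Ω × Ω)) (ℓ : Kernel Ω Ω) : Prop :=
  ∀ g : Ω × Ω → ℝ≥0∞, Measurable g →
    ∫⁻ p, g p ∂Φ = ∫⁻ x, ∫⁻ y, g (x, y) ∂(ℓ x) ∂Φ.fst

/-- Finite-dimensional distributions of the Markov chain with initial law `μ0` and kernel `ℓ`. -/
def fdd [MeasurableSpace Ω] (μ0 : Measure Ω) (ℓ : Kernel Ω Ω) :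
    (n : ℕ) → Measure (Fin (n + 1) → Ω)
  | 0 => μ0.map (fun x => fun _ => x)
  | n + 1 => (fdd μ0 ℓ n).bind (fun p => (ℓ (p (Fin.last n))).map (Fin.snoc p))

/-- `P` is the law of the Markov chain with initial law `μ0` and transition kernel `ℓ`. -/
def IsChainLaw [MeasurableSpace Ω] (μ0 : Measure Ω) (ℓ : Kernel Ω Ω)
    (P : Measure (ℕ → Ω)) : Prop :=
  IsProbabilityMeasure P ∧
  ∀ n : ℕ, P.map (fun ω (i : Fin (n + 1)) => ω (i : ℕ)) = fdd μ0 ℓ n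

/-- `Σ_{n=1}^{τ_B} g(Y_{n-1}, Y_n)`, where `τ_B = min{n ≥ 1 : Y_n ∈ B}`. -/
def stoppedSum (B : Set Ω) (g : Ω × Ω → ℝ≥0∞) (ω : ℕ → Ω) : ℝ≥0∞ :=
  ∑' n : ℕ, if ∀ m, 1 ≤ m → m ≤ n → ω m ∉ B then g (ω n, ω (n + 1)) else 0

/-- The event `τ_B < ∞`. -/
def HitsB (B : Set Ω) (ω : ℕ → Ω) : Prop := ∃ n : ℕ, 1 ≤ n ∧ ω n ∈ B

/-- `τ_B`, viewed in `ℝ≥0∞`. -/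
def hitTimeE (B : Set Ω) (ω : ℕ → Ω) : ℝ≥0∞ :=
  ∑' n : ℕ, if ∀ m, 1 ≤ m → m ≤ n → ω m ∉ B then 1 else 0

/-- The Berman-Konsowa functional `E^Φ[ (Σ_{n=1}^{τ_B} g(Y_{n-1},Y_n))⁻¹ ]`, with the
reciprocal taken to be `0` on `{τ_B = ∞}` (and automatically `0` when the sum is infinite). -/
def bkValue [MeasurableSpace Ω] (B : Set Ω) (g : Ω × Ω → ℝ≥0∞)
    (P : Measure (ℕ → Ω)) : ℝ≥0∞ :=
  ∫⁻ ω, (if HitsB B ω then (stoppedSum B g ω)⁻¹ else 0) ∂P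

end

/-! Up to `τ_B`, the law of `Y_t` is dominated by the left marginal `ν = Φ.fst`: the chain
carries into `C` (off `B`) at most `Φ(Ω × C)`, which flow conservation and `Φ(Ω × A) = 0`
bound by `Φ(C × Ω) = ν(C)`. Hence a step `Y_t → Y_{t+1}` taken before `τ_B` lies outside `χ`
with probability at most `∫ ℓ(x, χᶜ_x) ν(dx) = Φ(χᶜ) = 0`. So almost surely the stopped path
only uses edges of `χ`, and a repetition `Y_i = Y_j` would close a loop in `χ`. -/

section

variable {Ω : Type*}

lemma NoLoops.apply_ne_of_edges_mem {χ : Set (Ω × Ω)} (hχ : NoLoops χ) {ω : ℕ → Ω} {i j : ℕ}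
    (hij : i < j) (hedge : ∀ k, i ≤ k → k < j → (ω k, ω (k + 1)) ∈ χ) : ω i ≠ ω j := by
  intro heq
  obtain ⟨k, hk⟩ := hχ (j - i - 1) (fun k => ω (i + k)) (by
    simp only [Fin.val_last, Fin.val_zero, Nat.add_zero]
    rw [show i + (j - i - 1 + 1) = j by omega, heq])
  exact hk (by simpa [Nat.add_assoc] using hedge (i + k) (by omega) (by omega))

/-- The event `τ_B > t`. -/
def avoidsUpTo (B : Set Ω) (t : ℕ) : Set (ℕ → Ω) := {ω | ∀ m, 1 ≤ m → m ≤ t → ω m ∉ B}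

lemma avoidsUpTo_eq_preimage (B : Set Ω) (t : ℕ) :
    avoidsUpTo B t =
      (fun ω (i : Fin (t + 1)) => ω i) ⁻¹' {p | ∀ i : Fin (t + 1), 1 ≤ (i : ℕ) → p i ∉ B} := by
  ext ω
  exact ⟨fun h i hi => h i hi (Nat.lt_succ_iff.1 i.2), fun h m h1 h2 => h ⟨m, by omega⟩ h1⟩

variable [MeasurableSpace Ω]

lemma measurableSet_avoidsUpTo_prefix {B : Set Ω} (hB : MeasurableSet B) (t : ℕ) :
    MeasurableSet {p : Fin (t + 1) → Ω | ∀ i : Fin (t + 1), 1 ≤ (i : ℕ) → p i ∉ B} := by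
  simp only [Set.ofPred_forall]
  exact .iInter fun i => .iInter fun _ => (measurable_pi_apply i hB).compl

lemma measurable_snoc {n : ℕ} :
    Measurable (fun q : (Fin (n + 1) → Ω) × Ω => (Fin.snoc q.1 q.2 : Fin (n + 2) → Ω)) := by
  refine measurable_pi_lambda _ fun i => Fin.lastCases ?_ (fun j => ?_) i
  · simpa using measurable_snd
  · simpa [Function.comp_def] using (measurable_pi_apply j).comp measurable_fst

lemma Disintegrates.lintegral_fst_eq {Φ : Measure (Ω × Ω)} {ℓ : Kernel Ω Ω}
    (hdis : Disintegrates Φ ℓ) {T : Set (Ω × Ω)} (hT : MeasurableSet T) :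
    ∫⁻ x, ℓ x (Prod.mk x ⁻¹' T) ∂Φ.fst = Φ T := by
  rw [← lintegral_indicator_one hT, hdis _ (measurable_one.indicator hT)]
  refine lintegral_congr fun x => ?_
  rw [← lintegral_indicator_one (measurable_prodMk_left hT)]
  rfl

/-- No mass enters `A`, and mass is conserved off `A ∪ B`. -/
lemma IsUnitFlow.measure_univ_prod_diff_le {A B : Set Ω} {Φ : Measure (Ω × Ω)}
    (hΦ : IsUnitFlow A B Φ) (hA : MeasurableSet A) (hB : MeasurableSet B) {C : Set Ω}
    (hC : MeasurableSet C) : Φ (univ ×ˢ (C \ B)) ≤ Φ.fst C := by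
  obtain ⟨-, -, hA0, -, -, hcons, -⟩ := hΦ
  have hC' : MeasurableSet ((C \ B) \ A) := (hC.diff hB).diff hA
  calc Φ (univ ×ˢ (C \ B))
      ≤ Φ (univ ×ˢ ((C \ B) ∩ A)) + Φ (univ ×ˢ ((C \ B) \ A)) := by
        refine (measure_mono (le_of_eq ?_)).trans (measure_union_le _ _)
        rw [← Set.prod_union, Set.inter_union_sdiff]
    _ = Φ (((C \ B) \ A) ×ˢ univ) := by
        rw [measure_mono_null (Set.prod_mono le_rfl Set.inter_subset_right) hA0, zero_add,
          hcons _ hC' fun x hx => by simp_all]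
    _ ≤ Φ.fst C := by
        rw [Measure.fst_apply hC]
        exact measure_mono fun p hp => hp.1.1.1

section MarkovChain

variable {μ0 : Measure Ω} {ℓ : Kernel Ω Ω} {P : Measure (ℕ → Ω)}

lemma measurable_map_snoc [IsSFiniteKernel ℓ] {n : ℕ} :
    Measurable fun p : Fin (n + 1) → Ω =>
      (ℓ (p (Fin.last n))).map fun y => (Fin.snoc p y : Fin (n + 2) → Ω) := by
  refine Measure.measurable_of_measurable_coe _ fun s hs => ?_
  convert Kernel.measurable_kernel_prodMk_left
    (κ := ℓ.comap (fun p : Fin (n + 1) → Ω => p (Fin.last n)) (measurable_pi_apply _))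
    (measurable_snoc hs) using 1
  funext p
  exact Measure.map_apply (measurable_snoc.comp measurable_prodMk_left) hs

lemma fdd_succ_apply [IsSFiniteKernel ℓ] {n : ℕ} {S : Set (Fin (n + 2) → Ω)}
    (hS : MeasurableSet S) :
    fdd μ0 ℓ (n + 1) S = ∫⁻ p, ℓ (p (Fin.last n)) {y | Fin.snoc p y ∈ S} ∂fdd μ0 ℓ n := by
  rw [fdd, Measure.bind_apply hS measurable_map_snoc.aemeasurable]
  exact lintegral_congr fun p => Measure.map_apply (measurable_snoc.comp measurable_prodMk_left) hS

lemma measurable_prefix {n : ℕ} : Measurable fun (ω : ℕ → Ω) (i : Fin (n + 1)) => ω i :=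
  measurable_pi_lambda _ fun _ => measurable_pi_apply _

lemma IsChainLaw.map_eval_zero (hP : IsChainLaw μ0 ℓ P) : P.map (fun ω => ω 0) = μ0 := by
  have h : (fun ω : ℕ → Ω => ω 0) = (fun p : Fin 1 → Ω => p 0) ∘ fun ω (i : Fin 1) => ω i := rfl
  rw [h, ← Measure.map_map (measurable_pi_apply _) measurable_prefix, hP.2 0, fdd,
    Measure.map_map (measurable_pi_apply _)
      (measurable_pi_lambda (fun x (_ : Fin 1) => x) fun _ => measurable_id)]
  exact Measure.map_id

lemma IsChainLaw.measure_prefix_inter_step [IsSFiniteKernel ℓ] (hP : IsChainLaw μ0 ℓ P) {t : ℕ}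
    {S : Set (Fin (t + 1) → Ω)} (hS : MeasurableSet S) {T : Set (Ω × Ω)} (hT : MeasurableSet T) :
    P ((fun ω (i : Fin (t + 1)) => ω i) ⁻¹' S ∩ {ω | (ω t, ω (t + 1)) ∈ T}) =
      ∫⁻ ω in (fun ω (i : Fin (t + 1)) => ω i) ⁻¹' S, ℓ (ω t) (Prod.mk (ω t) ⁻¹' T) ∂P := by
  set S' : Set (Fin (t + 2) → Ω) :=
    {p | Fin.init p ∈ S ∧ (p (Fin.last t).castSucc, p (Fin.last (t + 1))) ∈ T}
  have hS' : MeasurableSet S' :=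
    (measurable_pi_lambda _ fun _ => measurable_pi_apply _) hS |>.inter
      ((measurable_pi_apply _).prodMk (measurable_pi_apply _) hT)
  have hf : Measurable fun p : Fin (t + 1) → Ω =>
      ℓ (p (Fin.last t)) (Prod.mk (p (Fin.last t)) ⁻¹' T) :=
    (Kernel.measurable_kernel_prodMk_left hT).comp (measurable_pi_apply _)
  calc P ((fun ω (i : Fin (t + 1)) => ω i) ⁻¹' S ∩ {ω | (ω t, ω (t + 1)) ∈ T})
      = fdd μ0 ℓ (t + 1) S' := by rw [← hP.2, Measure.map_apply measurable_prefix hS']; rfl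
    _ = ∫⁻ p, S.indicator (fun p => ℓ (p (Fin.last t)) (Prod.mk (p (Fin.last t)) ⁻¹' T)) p
          ∂fdd μ0 ℓ t := by
        rw [fdd_succ_apply hS']
        refine lintegral_congr fun p => ?_
        by_cases hp : p ∈ S
        · simp only [S', mem_ofPred_eq, Fin.init_snoc, hp, Fin.snoc_castSucc, Fin.snoc_last,
            true_and, indicator_of_mem]
          rfl
        · simp [S', hp, Fin.init_snoc]
    _ = _ := by
        rw [lintegral_indicator hS, ← hP.2, setLIntegral_map hS hf measurable_prefix]
        rfl

end MarkovChain

section Flow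

variable {A B : Set Ω} {Φ : Measure (Ω × Ω)} {μ0 : Measure Ω} {ℓ : Kernel Ω Ω}
  [IsSFiniteKernel ℓ] {P : Measure (ℕ → Ω)}

lemma IsChainLaw.measure_avoidsUpTo_edge_le (hP : IsChainLaw μ0 ℓ P) (hdis : Disintegrates Φ ℓ)
    (hB : MeasurableSet B) {t : ℕ} (hdom : (P.restrict (avoidsUpTo B t)).map (· t) ≤ Φ.fst)
    {T : Set (Ω × Ω)} (hT : MeasurableSet T) :
    P (avoidsUpTo B t ∩ {ω | (ω t, ω (t + 1)) ∈ T}) ≤ Φ T := by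
  rw [avoidsUpTo_eq_preimage] at hdom ⊢
  rw [hP.measure_prefix_inter_step (measurableSet_avoidsUpTo_prefix hB t) hT,
    ← hdis.lintegral_fst_eq hT]
  calc ∫⁻ ω in _, ℓ (ω t) (Prod.mk (ω t) ⁻¹' T) ∂P
      = ∫⁻ x, ℓ x (Prod.mk x ⁻¹' T) ∂(P.restrict _).map (· t) :=
        (lintegral_map (Kernel.measurable_kernel_prodMk_left hT) (measurable_pi_apply t)).symm
    _ ≤ _ := lintegral_mono' hdom le_rfl

lemma IsChainLaw.map_restrict_avoidsUpTo_le (hP : IsChainLaw μ0 ℓ P) (hμ0 : μ0 ≤ Φ.fst)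
    (hΦ : IsUnitFlow A B Φ) (hA : MeasurableSet A) (hB : MeasurableSet B)
    (hdis : Disintegrates Φ ℓ) (t : ℕ) :
    (P.restrict (avoidsUpTo B t)).map (· t) ≤ Φ.fst := by
  induction t with
  | zero =>
    have h0 : avoidsUpTo B 0 = univ := Set.eq_univ_of_forall fun ω m h1 h2 => by omega
    rw [h0, Measure.restrict_univ, hP.map_eval_zero]
    exact hμ0
  | succ t ih =>
    refine Measure.le_iff.2 fun C hC => ?_
    rw [Measure.map_apply (measurable_pi_apply _) hC,
      Measure.restrict_apply (measurable_pi_apply _ hC)]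
    calc P ((· (t + 1)) ⁻¹' C ∩ avoidsUpTo B (t + 1))
        = P (avoidsUpTo B t ∩ {ω | (ω t, ω (t + 1)) ∈ univ ×ˢ (C \ B)}) := by
          congr 1
          ext ω
          simp only [avoidsUpTo, Set.mem_inter_iff, Set.mem_preimage, Set.mem_ofPred_eq,
            Set.mem_prod, Set.mem_univ, true_and, Set.mem_sdiff]
          constructor
          · rintro ⟨hωC, hω⟩
            exact ⟨fun m h1 h2 => hω m h1 (by omega), hωC, hω _ (by omega) le_rfl⟩
          · rintro ⟨hω, hωC, hωB⟩
            refine ⟨hωC, fun m h1 h2 => ?_⟩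
            rcases Nat.lt_or_eq_of_le h2 with h2 | rfl
            exacts [hω m h1 (by omega), hωB]
      _ ≤ Φ (univ ×ˢ (C \ B)) :=
          hP.measure_avoidsUpTo_edge_le hdis hB ih (MeasurableSet.univ.prod (hC.diff hB))
      _ ≤ Φ.fst C := hΦ.measure_univ_prod_diff_le hA hB hC

lemma IsChainLaw.ae_edge_mem_of_avoidsUpTo (hP : IsChainLaw μ0 ℓ P) (hμ0 : μ0 ≤ Φ.fst)
    (hΦ : IsUnitFlow A B Φ) (hA : MeasurableSet A) (hB : MeasurableSet B)
    (hdis : Disintegrates Φ ℓ) {χ : Set (Ω × Ω)} (hχ : MeasurableSet χ) (hχ0 : Φ χᶜ = 0) :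
    ∀ᵐ ω ∂P, ∀ t, ω ∈ avoidsUpTo B t → (ω t, ω (t + 1)) ∈ χ := by
  refine ae_all_iff.2 fun t => measure_mono_null (fun ω hω => Classical.not_imp.1 hω) ?_
  exact nonpos_iff_eq_zero.1 <| hχ0 ▸ hP.measure_avoidsUpTo_edge_le hdis hB
    (hP.map_restrict_avoidsUpTo_le hμ0 hΦ hA hB hdis t) hχ.compl

end Flow

end

theorem loopFree_flow_selfAvoiding_general
    {Ω : Type*} [MeasurableSpace Ω]
    (A B : Set Ω) (hA : MeasurableSet A) (hB : MeasurableSet B)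
    (Φ : Measure (Ω × Ω)) (hΦ : IsLoopFreeUnitFlow A B Φ)
    (ℓ : Kernel Ω Ω) (hℓ : IsMarkovKernel ℓ) (hdis : Disintegrates Φ ℓ)
    (P : Measure (ℕ → Ω)) (hP : IsChainLaw (Φ.fst.restrict A) ℓ P) :
    ∀ᵐ ω ∂P, ∀ i j : ℕ, i < j → (∀ m : ℕ, 1 ≤ m → m < j → ω m ∉ B) → ω i ≠ ω j := by
  have := hℓ
  obtain ⟨hflow, χ, hχ, hχ0, -, hloop⟩ := hΦ
  filter_upwards [hP.ae_edge_mem_of_avoidsUpTo Measure.restrict_le_self hflow hA hB hdis hχ hχ0]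
    with ω hω i j hij hj
  exact hloop.apply_ne_of_edges_mem hij fun k _ hk => hω k fun m hm1 hmk => hj m hm1 (by omega)

/-- **Loop-free flows have almost surely self-avoiding stopped paths.** -/
theorem loopFree_flow_selfAvoiding
    {Ω : Type*} [MeasurableSpace Ω] [TopologicalSpace Ω] [PolishSpace Ω] [BorelSpace Ω]
    (A B : Set Ω) (hA : MeasurableSet A) (hB : MeasurableSet B) (hAB : Disjoint A B)
    (Φ : Measure (Ω × Ω)) (hΦ : IsLoopFreeUnitFlow A B Φ)
    (ℓ : Kernel Ω Ω) (hℓ : IsMarkovKernel ℓ) (hdis : Disintegrates Φ ℓ)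
    (P : Measure (ℕ → Ω)) (hP : IsChainLaw (Φ.fst.restrict A) ℓ P) :
    ∀ᵐ ω ∂P, ∀ i j : ℕ, i < j → (∀ m : ℕ, 1 ≤ m → m < j → ω m ∉ B) → ω i ≠ ω j :=
  loopFree_flow_selfAvoiding_general A B hA hB Φ hΦ ℓ hℓ hdis P hP
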